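/- There exist constants c₂ > c₁ > 0 such that for all r ≥ 2, the integral J_r = ∫ 2r²/(sin(ψ/r))² dψ, taken over the set {ψ ∈ (1, 2πr) : |sin(ψ/r)| > 1/r}, satisfies c₁·r⁴ ≤ J_r ≤ c₂·r⁴. -/

import Mathlib

/-!
Since `|sin (ψ / r)| ≤ |ψ / r - k π|`, the set avoids the windows `|ψ - k π r| ≤ 1` for
`k = 1, 2` and so lies in `(1, π r - 1) ∪ (π r + 1, 2 π r - 1)`. On each of these intervals
`-2 r³ cot (ψ / r)` is an antiderivative of the integrand, and `cot` is odd and `π`-periodic,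
so each contributes `4 r³ cot (1 / r) < 4 r⁴`. Conversely, `(2, 3)` lies in the set by
Jordan's inequality, and there `sin (ψ / r) ≤ ψ / r < 3 / r` bounds the integrand below
by `2 r⁴ / 9`.
-/

open MeasureTheory Real Set

namespace Real

theorem hasDerivAt_cot {x : ℝ} (hx : sin x ≠ 0) : HasDerivAt cot (-1 / sin x ^ 2) x := by
  have hcot : cot = fun y => cos y / sin y := funext cot_eq_cos_div_sin
  rw [hcot]
  refine ((hasDerivAt_cos x).div (hasDerivAt_sin x) hx).congr_deriv ?_
  rw [← sin_sq_add_cos_sq x]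
  ring

theorem cot_add_int_mul_pi (x : ℝ) (k : ℤ) : cot (x + k * π) = cot x := by
  rw [cot_eq_cos_div_sin, cot_eq_cos_div_sin, cos_add_int_mul_pi, sin_add_int_mul_pi,
    mul_div_mul_left _ _ (zpow_ne_zero k (by norm_num))]

theorem cot_neg (x : ℝ) : cot (-x) = -cot x := by
  rw [cot_eq_cos_div_sin, cot_eq_cos_div_sin, cos_neg, sin_neg, div_neg]

theorem cot_lt_one_div {x : ℝ} (h0 : 0 < x) (h : x < π / 2) : cot x < 1 / x := by
  rw [← inv_inv (cot x), cot_inv_eq_tan, ← one_div]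
  exact one_div_lt_one_div_of_lt h0 (lt_tan h0 h)

theorem sin_ne_zero_of_mem_Ioo {x : ℝ} {k : ℤ} (hx : x ∈ Ioo (k * π) ((k + 1) * π)) :
    sin x ≠ 0 := by
  rintro hsin
  obtain ⟨n, rfl⟩ := sin_eq_zero_iff.mp hsin
  have hlo : k < n := by exact_mod_cast lt_of_mul_lt_mul_right hx.1 pi_pos.le
  have hhi : n < k + 1 := by exact_mod_cast lt_of_mul_lt_mul_right hx.2 pi_pos.le
  omega

theorem abs_sin_le_abs_sub_int_mul_pi (x : ℝ) (k : ℤ) : |sin x| ≤ |x - k * π| := by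
  calc |sin x| = |sin (x - k * π)| := by
        rw [sin_sub_int_mul_pi, abs_mul, abs_zpow, abs_neg, abs_one, one_zpow, one_mul]
    _ ≤ |x - k * π| := abs_sin_le_abs

end Real

section Integral

variable {r : ℝ} (c : ℝ)

theorem continuousOn_div_sin_div_sq {s : Set ℝ} (h : ∀ x ∈ s, sin (x / r) ≠ 0) :
    ContinuousOn (fun x => c / sin (x / r) ^ 2) s :=
  continuousOn_const.div (by fun_prop) fun x hx => pow_ne_zero 2 (h x hx)

theorem integral_div_sin_div_sq {a b : ℝ} (hr : r ≠ 0)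
    (h : ∀ x ∈ uIcc a b, sin (x / r) ≠ 0) :
    ∫ x in a..b, c / sin (x / r) ^ 2 = c * r * (cot (a / r) - cot (b / r)) := by
  have hderiv : ∀ x ∈ uIcc a b,
      HasDerivAt (fun x => -(c * r) * cot (x / r)) (c / sin (x / r) ^ 2) x := fun x hx =>
    (((hasDerivAt_cot (h x hx)).comp x ((hasDerivAt_id x).div_const r)).const_mul _).congr_deriv
      (by field_simp)
  rw [intervalIntegral.integral_eq_sub_of_hasDerivAt hderiv
    (continuousOn_div_sin_div_sq c h).intervalIntegrable]
  ring

variable (k : ℤ) {δ : ℝ}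

theorem sin_div_ne_zero_of_mem_Icc (hr : 0 < r) (hδ : 0 < δ) {ψ : ℝ}
    (hψ : ψ ∈ Icc (k * π * r + δ) ((k + 1) * π * r - δ)) : sin (ψ / r) ≠ 0 := by
  apply sin_ne_zero_of_mem_Ioo (k := k)
  constructor
  · rw [lt_div_iff₀ hr]; linarith [hψ.1]
  · rw [div_lt_iff₀ hr]; linarith [hψ.2]

theorem integrableOn_Ioo_div_sin_div_sq (hr : 0 < r) (hδ : 0 < δ) :
    IntegrableOn (fun ψ => c / sin (ψ / r) ^ 2) (Ioo (k * π * r + δ) ((k + 1) * π * r - δ)) :=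
  (continuousOn_div_sin_div_sq c fun _ => sin_div_ne_zero_of_mem_Icc k hr hδ).integrableOn_Icc
    |>.mono_set Ioo_subset_Icc_self

theorem setIntegral_Ioo_div_sin_div_sq (hr : 0 < r) (hδ : 0 < δ) (hδr : 2 * δ ≤ π * r) :
    ∫ ψ in Ioo (k * π * r + δ) ((k + 1) * π * r - δ), c / sin (ψ / r) ^ 2 =
      2 * c * r * cot (δ / r) := by
  have hle : k * π * r + δ ≤ (k + 1) * π * r - δ := by linarith
  rw [← integral_Ioc_eq_integral_Ioo, ← intervalIntegral.integral_of_le hle,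
    integral_div_sin_div_sq c hr.ne' fun _ hx =>
      sin_div_ne_zero_of_mem_Icc k hr hδ (uIcc_of_le hle ▸ hx)]
  have hlo : (k * π * r + δ) / r = δ / r + k * π := by field_simp; ring
  have hhi : ((k + 1) * π * r - δ) / r = -(δ / r) + ((k + 1 : ℤ) : ℝ) * π := by
    push_cast; field_simp; ring
  rw [hlo, hhi, cot_add_int_mul_pi, cot_add_int_mul_pi, cot_neg]
  ring

theorem integrableOn_Ioo_union_Ioo_div_sin_div_sq (hr : 0 < r) (hδ : 0 < δ) :
    IntegrableOn (fun ψ => c / sin (ψ / r) ^ 2)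
      (Ioo δ (π * r - δ) ∪ Ioo (π * r + δ) (2 * π * r - δ)) := by
  have h₀ := integrableOn_Ioo_div_sin_div_sq c 0 hr hδ
  have h₁ := integrableOn_Ioo_div_sin_div_sq c 1 hr hδ
  simp only [Int.cast_zero, Int.cast_one, zero_mul, zero_add, one_mul, one_add_one_eq_two]
    at h₀ h₁
  exact h₀.union h₁

theorem setIntegral_Ioo_union_Ioo_div_sin_div_sq (hr : 0 < r) (hδ : 0 < δ)
    (hδr : 2 * δ ≤ π * r) :
    ∫ ψ in Ioo δ (π * r - δ) ∪ Ioo (π * r + δ) (2 * π * r - δ), c / sin (ψ / r) ^ 2 =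
      4 * c * r * cot (δ / r) := by
  have h₀ := setIntegral_Ioo_div_sin_div_sq c 0 hr hδ hδr
  have h₁ := setIntegral_Ioo_div_sin_div_sq c 1 hr hδ hδr
  have hint₀ := integrableOn_Ioo_div_sin_div_sq c 0 hr hδ
  have hint₁ := integrableOn_Ioo_div_sin_div_sq c 1 hr hδ
  simp only [Int.cast_zero, Int.cast_one, zero_mul, zero_add, one_mul, one_add_one_eq_two]
    at h₀ h₁ hint₀ hint₁
  have hdisj : Disjoint (Ioo δ (π * r - δ)) (Ioo (π * r + δ) (2 * π * r - δ)) :=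
    disjoint_left.2 fun _ h h' => by linarith [h.2, h'.1]
  rw [setIntegral_union hdisj measurableSet_Ioo hint₀ hint₁, h₀, h₁]
  ring

end Integral

theorem lt_abs_sub_int_mul_pi_mul {r δ ψ : ℝ} (hr : 0 < r) (k : ℤ)
    (h : δ / r < |sin (ψ / r)|) :
    δ < |ψ - k * π * r| := by
  have := h.trans_le (abs_sin_le_abs_sub_int_mul_pi (ψ / r) k)
  rwa [show ψ / r - k * π = (ψ - k * π * r) / r by field_simp, abs_div, abs_of_pos hr,
    div_lt_div_iff_of_pos_right hr] at this

theorem mem_Ioo_union_of_lt_abs_sin {r δ ψ : ℝ} (hr : 0 < r) (hψ : ψ ∈ Ioo δ (2 * π * r))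
    (h : δ / r < |sin (ψ / r)|) :
    ψ ∈ Ioo δ (π * r - δ) ∪ Ioo (π * r + δ) (2 * π * r - δ) := by
  have h₁ := lt_abs_sub_int_mul_pi_mul hr 1 h
  have h₂ := lt_abs_sub_int_mul_pi_mul hr 2 h
  push_cast at h₁ h₂
  rw [lt_abs] at h₁ h₂
  obtain ⟨hlo, hhi⟩ := hψ
  rcases h₁ with h₁ | h₁ <;> rcases h₂ with h₂ | h₂
  all_goals first
    | exact Or.inl ⟨hlo, by linarith⟩
    | exact Or.inr ⟨by linarith, by linarith⟩

theorem div_sq_le_div_sin_sq {c x : ℝ} (hc : 0 ≤ c) (hx : 0 ≤ x) (hsin : 0 < sin x) :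
    c / x ^ 2 ≤ c / sin x ^ 2 :=
  div_le_div_of_nonneg_left hc (by positivity) (pow_le_pow_left₀ hsin.le (sin_le hx) 2)

theorem mul_pow_four_le_setIntegral_Ioo_two_three {r : ℝ} (hr : 2 ≤ r) :
    2 / 9 * r ^ 4 ≤ ∫ ψ in Ioo (2 : ℝ) 3, 2 * r ^ 2 / sin (ψ / r) ^ 2 := by
  have hr0 : 0 < r := by linarith
  have hsin (ψ : ℝ) (hψ : ψ ∈ Icc (2 : ℝ) 3) : 0 < sin (ψ / r) :=
    sin_pos_of_pos_of_lt_pi (div_pos (by linarith [hψ.1]) hr0)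
      (by rw [div_lt_iff₀ hr0]; nlinarith [pi_gt_three, hψ.2])
  have hbound (ψ : ℝ) (hψ : ψ ∈ Ioo (2 : ℝ) 3) :
      2 / 9 * r ^ 4 ≤ 2 * r ^ 2 / sin (ψ / r) ^ 2 :=
    calc 2 / 9 * r ^ 4 = 2 * r ^ 2 * r ^ 2 / 3 ^ 2 := by ring
      _ ≤ 2 * r ^ 2 * r ^ 2 / ψ ^ 2 :=
          div_le_div_of_nonneg_left (by positivity) (by nlinarith [hψ.1])
            (by nlinarith [hψ.1, hψ.2])
      _ = 2 * r ^ 2 / (ψ / r) ^ 2 := by rw [div_pow, div_div_eq_mul_div]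
      _ ≤ 2 * r ^ 2 / sin (ψ / r) ^ 2 := div_sq_le_div_sin_sq (by positivity)
          (div_nonneg (by linarith [hψ.1]) hr0.le) (hsin ψ (Ioo_subset_Icc_self hψ))
  have hint : IntegrableOn (fun ψ => 2 * r ^ 2 / sin (ψ / r) ^ 2) (Icc 2 3) :=
    (continuousOn_div_sin_div_sq _ fun ψ hψ => (hsin ψ hψ).ne').integrableOn_Icc
  calc 2 / 9 * r ^ 4 = 2 / 9 * r ^ 4 * volume.real (Ioo (2 : ℝ) 3) := by norm_num
    _ ≤ ∫ ψ in Ioo (2 : ℝ) 3, 2 * r ^ 2 / sin (ψ / r) ^ 2 :=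
        setIntegral_ge_of_const_le_real measurableSet_Ioo (by simp) hbound
          (hint.mono_set Ioo_subset_Icc_self)

theorem one_div_lt_sin_div {r ψ : ℝ} (hr : 0 < r) (hψ : π < 2 * ψ)
    (hψr : 2 * ψ ≤ π * r) :
    1 / r < sin (ψ / r) := by
  have hx : ψ / r ≤ π / 2 := by rw [div_le_div_iff₀ hr two_pos]; linarith
  calc 1 / r < 2 / π * (ψ / r) := by
        rw [div_mul_div_comm, div_lt_div_iff₀ hr (by positivity)]; nlinarith
    _ ≤ sin (ψ / r) := mul_le_sin (div_nonneg (by linarith [pi_pos]) hr.le) hx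

theorem J_r_two_sided : ∃ c₁ c₂ : ℝ, 0 < c₁ ∧ c₁ < c₂ ∧
    ∀ r : ℝ, 2 ≤ r →
      c₁ * r ^ 4 ≤
        (∫ ψ in {ψ : ℝ | ψ ∈ Set.Ioo 1 (2 * Real.pi * r) ∧ |Real.sin (ψ / r)| > 1 / r},
          2 * r ^ 2 / Real.sin (ψ / r) ^ 2) ∧
      (∫ ψ in {ψ : ℝ | ψ ∈ Set.Ioo 1 (2 * Real.pi * r) ∧ |Real.sin (ψ / r)| > 1 / r},
          2 * r ^ 2 / Real.sin (ψ / r) ^ 2) ≤ c₂ * r ^ 4 := by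
  refine ⟨2 / 9, 8, by norm_num, by norm_num, fun r hr => ?_⟩
  have hr0 : 0 < r := by linarith
  set S := {ψ : ℝ | ψ ∈ Ioo 1 (2 * π * r) ∧ |sin (ψ / r)| > 1 / r}
  set U := Ioo 1 (π * r - 1) ∪ Ioo (π * r + 1) (2 * π * r - 1)
  have hSU : S ⊆ U := fun ψ hψ => mem_Ioo_union_of_lt_abs_sin hr0 hψ.1 hψ.2
  have hTS : Ioo 2 3 ⊆ S := fun ψ hψ =>
    ⟨⟨by linarith [hψ.1], by nlinarith [pi_gt_three, hψ.2]⟩,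
      (one_div_lt_sin_div hr0 (by linarith [pi_lt_four, hψ.1])
        (by nlinarith [pi_gt_three, hψ.2])).trans_le (le_abs_self _)⟩
  have hintU := integrableOn_Ioo_union_Ioo_div_sin_div_sq (2 * r ^ 2) hr0 one_pos
  have hintS := hintU.mono_set hSU
  have hnonneg {s : Set ℝ} : 0 ≤ᵐ[volume.restrict s] fun ψ => 2 * r ^ 2 / sin (ψ / r) ^ 2 :=
    ae_of_all _ fun ψ => by positivity
  have hcot : cot (1 / r) < r := by
    simpa using cot_lt_one_div (x := 1 / r) (by positivity)
      (by rw [div_lt_div_iff₀ hr0 two_pos]; nlinarith [pi_gt_three])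
  constructor
  · exact (mul_pow_four_le_setIntegral_Ioo_two_three hr).trans
      (setIntegral_mono_set hintS hnonneg (ae_of_all _ hTS))
  · calc _ ≤ ∫ ψ in U, 2 * r ^ 2 / sin (ψ / r) ^ 2 :=
          setIntegral_mono_set hintU hnonneg (ae_of_all _ hSU)
      _ = 4 * (2 * r ^ 2) * r * cot (1 / r) :=
          setIntegral_Ioo_union_Ioo_div_sin_div_sq _ hr0 one_pos (by nlinarith [pi_gt_three])
      _ ≤ 8 * r ^ 4 := by nlinarith [pow_pos hr0 3]
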